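/- arXiv:1808.00175 — 2 statements merged into one kernel-verified Lean document; each statement's English description precedes it below -/
import Mathlib

section
/- Let n, m, k be real numbers with k ≥ 3, n > 2k, and suppose 2m ≥ 4n + 4k - 6 + 8(k-1)²/(n - 2k). Define d̄ = (2m - 3(n - k))/k. Then d̄ ≥ 9 + 4√2 - 2(√2+1)²/k. -/
/-- Lemma 3.4(iv), arithmetic form: if `k ≥ 3`, `n > 2k` and
`2m ≥ 4n + 4k - 6 + 8(k-1)²/(n-2k)`, then the average degree
`d̄ = (2m - 3(n-k))/k` satisfies `d̄ ≥ 9 + 4√2 - 2(√2+1)²/k`. -/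
theorem stmt_15 (n m k : ℝ) (hk : 3 ≤ k) (hn : 2 * k < n)
    (h : 2 * m ≥ 4 * n + 4 * k - 6 + 8 * (k - 1) ^ 2 / (n - 2 * k)) :
    (2 * m - 3 * (n - k)) / k ≥ 9 + 4 * Real.sqrt 2 - 2 * (Real.sqrt 2 + 1) ^ 2 / k := by
  have hk0 : (0:ℝ) < k := by linarith
  have hs : (0:ℝ) < n - 2 * k := by linarith
  have h2 : Real.sqrt 2 ^ 2 = 2 := Real.sq_sqrt (by norm_num)
  have hdiv : 8 * (k - 1) ^ 2 / (n - 2 * k) ≥ 4 * Real.sqrt 2 * (k - 1) - (n - 2 * k) := by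
    rw [ge_iff_le, le_div_iff₀ hs]
    nlinarith [sq_nonneg (n - 2 * k - 2 * Real.sqrt 2 * (k - 1))]
  have key : 2 * m - 3 * (n - k) ≥ (9 + 4 * Real.sqrt 2) * k - (6 + 4 * Real.sqrt 2) := by
    nlinarith [hdiv, h]
  have heq : 9 + 4 * Real.sqrt 2 - 2 * (Real.sqrt 2 + 1) ^ 2 / k
      = ((9 + 4 * Real.sqrt 2) * k - (6 + 4 * Real.sqrt 2)) / k := by
    field_simp
    nlinarith [h2]
  rw [ge_iff_le, heq]
  gcongr
end

section
/- Let r ≥ 3 and let p(λ) = (λ-1)(λ-2)·(λ^{r-2} - c₁λ^{r-3} + c₂λ^{r-4} - ⋯) be a monic real polynomial of degree r with all roots real, whose expansion Σ b_i λ^i satisfies b_{r-1} = -m and b_{r-2} = C(m,2) - γ for reals m, γ. Then γ ≥ ((m - r)(m - 4) + r - 1)/(2r - 4). -/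
/-!
Since `p` has `r` real roots, namely `1`, `2` and the `r - 2` roots `t` of `q`, Vieta's
formulas give `∑ x = m` and `e₂ = m(m-1)/2 - γ` over the roots of `p`. Newton's identity
`∑ x² = (∑ x)² - 2 e₂` turns this into `∑ₜ x² = m + 2γ - 5`, while `∑ₜ x = m - 3`, and
Cauchy–Schwarz `(∑ₜ x)² ≤ (r - 2) ∑ₜ x²` is exactly the claimed bound on `γ`.
-/

open Polynomial

namespace Multiset

variable {R : Type*}

theorem esymm_one [CommSemiring R] (s : Multiset R) : s.esymm 1 = s.sum := by
  simp [esymm, powersetCard_one, map_map]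

theorem esymm_cons_succ [CommSemiring R] (a : R) (s : Multiset R) (n : ℕ) :
    (a ::ₘ s).esymm (n + 1) = s.esymm (n + 1) + a * s.esymm n := by
  simp only [esymm, powersetCard_cons, map_add, sum_add, map_map, Function.comp_def, prod_cons,
    sum_map_mul_left]

theorem sq_sum_eq_sum_sq_add_two_mul_esymm_two [CommSemiring R] (s : Multiset R) :
    s.sum ^ 2 = (s.map (· ^ 2)).sum + 2 * s.esymm 2 := by
  induction s using Multiset.induction with
  | empty => simp [esymm, powersetCard_zero_right]
  | cons a s ih =>
    rw [sum_cons, map_cons, sum_cons, esymm_cons_succ, esymm_one, add_sq, ih]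
    ring

theorem sq_sum_le_card_mul_sum_sq [Semiring R] [LinearOrder R] [IsStrictOrderedRing R]
    [ExistsAddOfLE R] (s : Multiset R) :
    s.sum ^ 2 ≤ card s * (s.map (· ^ 2)).sum := by
  induction s using Quotient.inductionOn with
  | h l =>
    simpa [Fin.sum_univ_fun_getElem l (· ^ 2)] using
      _root_.sq_sum_le_card_mul_sum_sq (s := Finset.univ) (f := fun i : Fin l.length => l[i])

end Multiset

namespace Polynomial

variable {R : Type*} [CommRing R] [IsDomain R] {p : R[X]}

theorem natDegree_X_sub_C_mul_X_sub_C_mul (a b : R) (hp : p ≠ 0) :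
    ((X - C a) * (X - C b) * p).natDegree = p.natDegree + 2 := by
  rw [natDegree_mul (mul_ne_zero (X_sub_C_ne_zero a) (X_sub_C_ne_zero b)) hp,
    natDegree_mul (X_sub_C_ne_zero a) (X_sub_C_ne_zero b), natDegree_X_sub_C, natDegree_X_sub_C]
  ring

theorem roots_X_sub_C_mul_X_sub_C_mul (a b : R) (hp : p ≠ 0) :
    ((X - C a) * (X - C b) * p).roots = a ::ₘ b ::ₘ p.roots := by
  have hab : (X - C a) * (X - C b) ≠ 0 := mul_ne_zero (X_sub_C_ne_zero a) (X_sub_C_ne_zero b)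
  rw [roots_mul (mul_ne_zero hab hp), roots_mul hab, roots_X_sub_C, roots_X_sub_C, add_assoc,
    Multiset.singleton_add, Multiset.singleton_add]

namespace Monic

theorem coeff_natDegree_sub_one_eq_neg_sum_roots (hp : p.Monic)
    (hroots : Multiset.card p.roots = p.natDegree) (hdeg : 1 ≤ p.natDegree) :
    p.coeff (p.natDegree - 1) = -p.roots.sum := by
  rw [coeff_eq_esymm_roots_of_card hroots (Nat.sub_le _ _), Nat.sub_sub_self hdeg,
    hp.leadingCoeff, Multiset.esymm_one]
  ring

theorem coeff_natDegree_sub_two_eq_esymm_two_roots (hp : p.Monic)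
    (hroots : Multiset.card p.roots = p.natDegree) (hdeg : 2 ≤ p.natDegree) :
    p.coeff (p.natDegree - 2) = p.roots.esymm 2 := by
  rw [coeff_eq_esymm_roots_of_card hroots (Nat.sub_le _ _), Nat.sub_sub_self hdeg,
    hp.leadingCoeff]
  ring

end Monic

end Polynomial

/-- Abstract form of Lemma 3.3(ii): let `p = (X-1)(X-2) * q` be a monic real
polynomial of degree `r ≥ 3` with all roots real, whose coefficients satisfy
`b_{r-1} = -m` and `b_{r-2} = C(m,2) - γ`.  Then
`γ ≥ ((m-r)(m-4) + r - 1)/(2r-4)`. -/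
theorem stmt_18 (r : ℕ) (hr : 3 ≤ r) (p q : Polynomial ℝ) (m γ : ℝ)
    (hp : p = (X - C 1) * (X - C 2) * q) (hq : q.Monic)
    (hqdeg : q.natDegree = r - 2)
    (hroots : p.roots.card = r)
    (hb1 : p.coeff (r - 1) = -m)
    (hb2 : p.coeff (r - 2) = m * (m - 1) / 2 - γ) :
    γ ≥ ((m - r) * (m - 4) + r - 1) / (2 * r - 4) := by
  have hpm : p.Monic := hp ▸ ((monic_X_sub_C 1).mul (monic_X_sub_C 2)).mul hq
  have hpdeg : p.natDegree = r := by
    rw [hp, natDegree_X_sub_C_mul_X_sub_C_mul _ _ hq.ne_zero, hqdeg]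
    omega
  have hrootsp : p.roots = 1 ::ₘ 2 ::ₘ q.roots := hp ▸ roots_X_sub_C_mul_X_sub_C_mul _ _ hq.ne_zero
  have hcard : Multiset.card p.roots = p.natDegree := hroots.trans hpdeg.symm
  have hsum : p.roots.sum = m := by
    have := hpm.coeff_natDegree_sub_one_eq_neg_sum_roots hcard (by omega)
    rw [hpdeg, hb1] at this
    linarith
  have he2 : p.roots.esymm 2 = m * (m - 1) / 2 - γ := by
    rw [← hpm.coeff_natDegree_sub_two_eq_esymm_two_roots hcard (by omega), hpdeg, hb2]
  have hcardq : (Multiset.card q.roots : ℝ) = r - 2 := by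
    rw [hrootsp, Multiset.card_cons, Multiset.card_cons] at hroots
    rw [← hroots]
    push_cast
    ring
  have hsumq : q.roots.sum = m - 3 := by
    rw [hrootsp, Multiset.sum_cons, Multiset.sum_cons] at hsum
    linarith
  have hsqq : (q.roots.map (· ^ 2)).sum = m + 2 * γ - 5 := by
    have := Multiset.sq_sum_eq_sum_sq_add_two_mul_esymm_two p.roots
    rw [hsum, he2, hrootsp, Multiset.map_cons, Multiset.map_cons, Multiset.sum_cons,
      Multiset.sum_cons] at this
    linarith
  have hcs := Multiset.sq_sum_le_card_mul_sum_sq q.roots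
  rw [hcardq, hsumq, hsqq] at hcs
  have hr' : (3 : ℝ) ≤ r := by exact_mod_cast hr
  rw [ge_iff_le, div_le_iff₀ (by linarith)]
  linear_combination hcs
end
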